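/- arXiv:1512.07634 — 4 statements merged into one kernel-verified Lean document; each statement's English description precedes it below -/
import Mathlib

section
/- For subspaces U ∈ EF_q(v) and W ∈ EF_q(v') with pivot vectors v, v' ∈ F_2^n, the subspace distance satisfies d_S(U,W) ≥ d_H(v,v'), where d_H is the Hamming distance. -/
open Module

/-- A full-rank `k × n` matrix is in reduced row echelon form with pivot columns
given by the strictly increasing list `c` if the pivot columns form an identity
submatrix and all entries to the left of each pivot are zero. -/
def IsRRE {F : Type*} [Field F] {k n : ℕ} (A : Matrix (Fin k) (Fin n) F)
    (c : Fin k → Fin n) : Prop :=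
  StrictMono c ∧ (∀ i j, A i (c j) = if j = i then 1 else 0) ∧
    (∀ (i : Fin k) (j : Fin n), (j : ℕ) < (c i : ℕ) → A i j = 0)

/-- The row space of a matrix: the span of its rows. -/
def rowSpace {F : Type*} [Field F] {k n : ℕ} (A : Matrix (Fin k) (Fin n) F) :
    Submodule F (Fin n → F) :=
  Submodule.span F (Set.range fun i => A i)

/-- The subspace distance `d_S(U,W) = dim U + dim W - 2 dim (U ⊓ W)`. -/
noncomputable def subspaceDist {F : Type*} [Field F] {V : Type*} [AddCommGroup V]
    [Module F V] (U W : Submodule F V) : ℕ :=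
  finrank F U + finrank F W - 2 * finrank F ↥(U ⊓ W)

lemma rre_eval {F : Type*} [Field F] {k n : ℕ} {A : Matrix (Fin k) (Fin n) F}
    {c : Fin k → Fin n} (hA : IsRRE A c) (a : Fin k → F) (j : Fin k) :
    (∑ i, a i • A i) (c j) = a j := by
  simp only [Finset.sum_apply, Pi.smul_apply, smul_eq_mul, hA.2.1]
  simp

lemma rre_coords {F : Type*} [Field F] {k n : ℕ} {A : Matrix (Fin k) (Fin n) F}
    {c : Fin k → Fin n} (hA : IsRRE A c) {x : Fin n → F} (hx : x ∈ rowSpace A) :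
    x = ∑ i, x (c i) • A i := by
  obtain ⟨a, ha⟩ := Submodule.mem_span_range_iff_exists_fun F |>.mp hx
  have h : ∀ j, x (c j) = a j := fun j => by
    rw [← ha]; exact rre_eval hA a j
  rw [← ha]
  exact Finset.sum_congr rfl fun i _ => by rw [ha, h]

lemma rre_leading {F : Type*} [Field F] {k n : ℕ} {A : Matrix (Fin k) (Fin n) F}
    {c : Fin k → Fin n} (hA : IsRRE A c) {x : Fin n → F} (hx : x ∈ rowSpace A)
    (hx0 : x ≠ 0) :
    ∃ i, x (c i) ≠ 0 ∧ ∀ j : Fin n, (j : ℕ) < (c i : ℕ) → x j = 0 := by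
  classical
  have hrep := rre_coords hA hx
  set T : Finset (Fin k) := Finset.univ.filter (fun i => x (c i) ≠ 0) with hT
  have hTne : T.Nonempty := by
    by_contra h
    apply hx0
    have hall : ∀ i, x (c i) = 0 := by
      intro i
      by_contra hi
      exact h ⟨i, by simp [hT, hi]⟩
    rw [hrep]
    simp [hall]
  refine ⟨T.min' hTne, by have := T.min'_mem hTne; simpa [hT] using this, ?_⟩
  intro j hj
  rw [hrep]
  simp only [Finset.sum_apply, Pi.smul_apply, smul_eq_mul]
  apply Finset.sum_eq_zero
  intro i _
  by_cases hi : x (c i) = 0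
  · rw [hi, zero_mul]
  · have hiT : i ∈ T := by simp [hT, hi]
    have : T.min' hTne ≤ i := T.min'_le i hiT
    have : (c (T.min' hTne) : ℕ) ≤ (c i : ℕ) := hA.1.monotone this
    rw [hA.2.2 i j (lt_of_lt_of_le hj this), mul_zero]

lemma finrank_rowSpace {F : Type*} [Field F] {k n : ℕ} {A : Matrix (Fin k) (Fin n) F}
    {c : Fin k → Fin n} (hA : IsRRE A c) : finrank F (rowSpace A) = k := by
  have hli : LinearIndependent F (fun i => A i) := by
    rw [Fintype.linearIndependent_iff]
    intro g hg i
    have := congrFun hg (c i)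
    rw [rre_eval hA g i] at this
    simpa using this
  rw [rowSpace, finrank_span_eq_card hli, Fintype.card_fin]

/-- If `U ∈ EF_q(v)` and `W ∈ EF_q(v')`, i.e. `U` and `W` are the row spaces of
matrices in reduced row echelon form with pivot vectors `v` and `v'`, then
`d_S(U,W) ≥ d_H(v,v')`, the Hamming distance of the pivot vectors. -/
theorem subspaceDist_ge_hammingDist_pivots {F : Type*} [Field F] [Fintype F]
    {n k k' : ℕ} (v v' : Fin n → Bool)
    (A : Matrix (Fin k) (Fin n) F) (c : Fin k → Fin n) (hA : IsRRE A c)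
    (hvA : ∀ j, v j = true ↔ ∃ i, c i = j)
    (A' : Matrix (Fin k') (Fin n) F) (c' : Fin k' → Fin n) (hA' : IsRRE A' c')
    (hvA' : ∀ j, v' j = true ↔ ∃ i, c' i = j) :
    hammingDist v v' ≤ subspaceDist (rowSpace A) (rowSpace A') := by
  classical
  set U := rowSpace A
  set W := rowSpace A'
  -- the intersection injects into functions on common pivots
  set S := {j : Fin n // v j = true ∧ v' j = true}
  let φ : ↥(U ⊓ W) →ₗ[F] (S → F) :=
    { toFun := fun x s => x.1 s.1
      map_add' := fun x y => rfl
      map_smul' := fun r x => rfl }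
  have hφ : Function.Injective φ := by
    rw [injective_iff_map_eq_zero]
    intro x hx
    suffices hc : (x : Fin n → F) = 0 from Subtype.ext hc
    by_contra hx0'
    obtain ⟨i, hi1, hi2⟩ := rre_leading hA x.2.1 hx0'
    obtain ⟨i', hi1', hi2'⟩ := rre_leading hA' x.2.2 hx0'
    rcases lt_trichotomy ((c i : ℕ)) ((c' i' : ℕ)) with h | h | h
    · exact hi1 (hi2' (c i) h)
    · have hv : v (c i) = true := (hvA (c i)).mpr ⟨i, rfl⟩
      have hv' : v' (c i) = true := (hvA' (c i)).mpr ⟨i', Fin.ext h.symm⟩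
      exact hi1 (congrFun hx ⟨c i, hv, hv'⟩)
    · exact hi1' (hi2 (c' i') h)
  have hdim : finrank F ↥(U ⊓ W) ≤ Fintype.card S := by
    have := LinearMap.finrank_le_finrank_of_injective hφ
    rwa [Module.finrank_fintype_fun_eq_card] at this
  have hk : (Finset.univ.filter fun j => v j = true).card = k := by
    have : (Finset.univ.filter fun j => v j = true) = Finset.univ.image c := by
      ext j; simp [hvA, eq_comm]
    rw [this, Finset.card_image_of_injective _ hA.1.injective, Finset.card_univ,
      Fintype.card_fin]
  have hk' : (Finset.univ.filter fun j => v' j = true).card = k' := by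
    have : (Finset.univ.filter fun j => v' j = true) = Finset.univ.image c' := by
      ext j; simp [hvA', eq_comm]
    rw [this, Finset.card_image_of_injective _ hA'.1.injective, Finset.card_univ,
      Fintype.card_fin]
  have hcount : hammingDist v v' + 2 * Fintype.card S = k + k' := by
    rw [← hk, ← hk', hammingDist, Fintype.card_subtype]
    simp only [Finset.card_filter]
    rw [Finset.mul_sum, ← Finset.sum_add_distrib, ← Finset.sum_add_distrib]
    exact Finset.sum_congr rfl fun j _ => by
      cases hv : v j <;> cases hv' : v' j <;> simp [hv, hv']
  rw [subspaceDist, finrank_rowSpace hA, finrank_rowSpace hA']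
  omega
end

section
/- If U and W are subspaces of F_q^n whose reduced row echelon form generator matrices have the same pivot vector v, then d_S(U,W) = 2·d_R(τ(U), τ(W)), where τ assigns to a subspace its generator matrix in reduced row echelon form and d_R is the rank distance. -/
open Module

/-- Evaluating a linear combination of rows at a pivot column gives the coefficient. -/
lemma pivot_eval {F : Type*} [Field F] {k n : ℕ} {M : Matrix (Fin k) (Fin n) F}
    {c : Fin k → Fin n} (hc : Function.Injective c)
    (hM : ∀ i j, M i (c j) = if j = i then 1 else 0) (g : Fin k → F) (j : Fin k) :
    (∑ i, g i • M i) (c j) = g j := by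
  rw [Finset.sum_apply]
  have : ∀ i, (g i • M i) (c j) = if i = j then g i else 0 := by
    intro i
    simp only [Pi.smul_apply, smul_eq_mul, hM i j]
    by_cases h : i = j
    · subst h; simp
    · rw [if_neg h, if_neg, mul_zero]
      exact fun hij => h hij.symm
  rw [Finset.sum_congr rfl fun i _ => this i, Finset.sum_ite_eq' Finset.univ j g]
  simp

lemma rows_linIndep {F : Type*} [Field F] {k n : ℕ} {M : Matrix (Fin k) (Fin n) F}
    {c : Fin k → Fin n} (hc : Function.Injective c)
    (hM : ∀ i j, M i (c j) = if j = i then 1 else 0) :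
    LinearIndependent F (fun i => M i) := by
  rw [Fintype.linearIndependent_iff]
  intro g hg i
  have := pivot_eval hc hM g i
  rw [hg] at this
  simpa using this.symm

/-- If `U` and `W` are subspaces of `F_q^n` whose reduced row echelon form generator
matrices `A = τ(U)` and `B = τ(W)` have the same pivot vector `v`, then
`d_S(U,W) = 2 · d_R(τ(U), τ(W)) = 2 · rank (A - B)`. -/
theorem subspaceDist_eq_two_mul_rankDist_of_same_pivots {F : Type*} [Field F] [Fintype F]
    {n k : ℕ} (v : Fin n → Bool)
    (A B : Matrix (Fin k) (Fin n) F) (c c' : Fin k → Fin n)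
    (hA : IsRRE A c) (hB : IsRRE B c')
    (hvA : ∀ j, v j = true ↔ ∃ i, c i = j)
    (hvB : ∀ j, v j = true ↔ ∃ i, c' i = j) :
    subspaceDist (rowSpace A) (rowSpace B) = 2 * (A - B).rank := by
  obtain ⟨hc, hAc, -⟩ := hA
  obtain ⟨hc', hBc, -⟩ := hB
  have hcc : c' = c := by
    have inst : WellFoundedLT (Fin k) := inferInstance
    refine @Set.range_injOn_strictMono (Fin k) (Fin n) _ _ inst c' hc' c hc ?_
    ext j
    simp only [Set.mem_range]
    rw [← hvB j, hvA j]
  rw [hcc] at hBc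
  have hcinj : Function.Injective c := hc.injective
  -- dimensions of U and W
  have hU : finrank F (rowSpace A) = k := by
    have h : LinearIndependent F (fun i => A i) := rows_linIndep hcinj hAc
    rw [rowSpace, finrank_span_eq_card h, Fintype.card_fin]
  have hW : finrank F (rowSpace B) = k := by
    have h : LinearIndependent F (fun i => B i) := rows_linIndep hcinj hBc
    rw [rowSpace, finrank_span_eq_card h, Fintype.card_fin]
  set D : Submodule F (Fin n → F) := Submodule.span F (Set.range fun i => A i - B i) with hD
  -- the difference rows vanish on pivot columns
  have hDzero : ∀ x ∈ D, ∀ j, x (c j) = 0 := by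
    intro x hx j
    obtain ⟨h, rfl⟩ := (Submodule.mem_span_range_iff_exists_fun F).mp hx
    rw [Finset.sum_apply]
    refine Finset.sum_eq_zero fun i _ => ?_
    simp [hAc i j, hBc i j]
  -- disjointness
  have hinf : rowSpace A ⊓ D = ⊥ := by
    rw [eq_bot_iff]
    rintro x ⟨hx1, hx2⟩
    obtain ⟨g, rfl⟩ := (Submodule.mem_span_range_iff_exists_fun F).mp hx1
    have hg0 : ∀ j, g j = 0 := by
      intro j
      have := pivot_eval hcinj hAc g j
      rw [hDzero _ hx2 j] at this
      exact this.symm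
    have : ∀ j, g j • A j = 0 := fun j => by rw [hg0 j, zero_smul]
    simp only [Finset.sum_congr rfl fun j _ => this j, Finset.sum_const_zero]
    exact Submodule.zero_mem ⊥
  -- sup decomposition
  have hsup : rowSpace A ⊔ rowSpace B = rowSpace A ⊔ D := by
    apply le_antisymm
    · refine sup_le le_sup_left ?_
      rw [rowSpace, Submodule.span_le]
      rintro x ⟨i, rfl⟩
      have h1 : A i - (A i - B i) ∈ rowSpace A ⊔ D := Submodule.sub_mem _
        (Submodule.mem_sup_left (Submodule.subset_span ⟨i, rfl⟩))
        (Submodule.mem_sup_right (Submodule.subset_span ⟨i, rfl⟩))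
      simpa using h1
    · refine sup_le le_sup_left ?_
      rw [hD, Submodule.span_le]
      rintro x ⟨i, rfl⟩
      exact Submodule.sub_mem _
        (Submodule.mem_sup_left (Submodule.subset_span ⟨i, rfl⟩))
        (Submodule.mem_sup_right (Submodule.subset_span ⟨i, rfl⟩))
  have hDrank : finrank F D = (A - B).rank := by
    rw [(A - B).rank_eq_finrank_span_row, hD]
    rfl
  have hsupdim : finrank F ↥(rowSpace A ⊔ rowSpace B) = k + (A - B).rank := by
    have h2 := Submodule.finrank_sup_add_finrank_inf_eq (rowSpace A) D
    rw [hinf, finrank_bot] at h2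
    rw [hsup]
    omega
  have hkey := Submodule.finrank_sup_add_finrank_inf_eq (rowSpace A) (rowSpace B)
  rw [hsupdim, hU, hW] at hkey
  have hrle : (A - B).rank ≤ k := (A - B).rank_le_height
  rw [subspaceDist, hU, hW]
  omega
end

section
/- Let A, A' be full-rank k'×n' matrices and B, B' full-rank (k-k')×(n-n') matrices over F_q, all in reduced row echelon form, and let F, F' be k'×(n-n'-k+k') matrices. If A = A' and B = B', then the subspace distance between the row spaces of the block matrices [[A, φ_B(F)],[0, B]] and [[A, φ_B(F')],[0, B]] equals 2·d_R(F, F'). -/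
open Module

open scoped Classical in
/-- `insertZeroCols c M` is `φ_B(M)`: the matrix obtained from `M` by inserting zero
columns at the pivot positions (given by `c`) of a full-rank RRE matrix `B` with
`kb` rows and `nb` columns. -/
noncomputable def insertZeroCols {F : Type*} [Field F] {k' kb nb : ℕ}
    (c : Fin kb → Fin nb) (M : Matrix (Fin k') (Fin (nb - kb)) F) :
    Matrix (Fin k') (Fin nb) F :=
  Matrix.of fun i j =>
    if ∃ t, c t = j then 0
    else if h : (j : ℕ) - (Finset.univ.filter fun t : Fin kb => (c t : ℕ) ≤ (j : ℕ)).card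
        < nb - kb then
      M i ⟨_, h⟩
    else 0

/-- Row space of a matrix whose columns are indexed by a sum type. -/
def rowSpace' {F : Type*} [Field F] {ρ ι : Type*} (A : Matrix ρ ι F) :
    Submodule F (ι → F) :=
  Submodule.span F (Set.range fun i => A i)

/-!
Write `G`, `G'` for the two block matrices. Both have the identity submatrix on the pivot
columns of `A` and `B`, since `φ_B` vanishes on the pivot columns of `B`; so their rows are
independent and span spaces `U`, `W` of dimension `k`. The difference `G - G'` is
`[[0, φ_B(M - M')],[0, 0]]`, whose row space `S` has dimension `rank (M - M')` and meets `U`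
trivially because its vectors vanish on all pivot columns. Hence
`dim (U + W) = dim (U + S) = k + rank (M - M')` and `d_S(U, W) = 2 dim (U + W) - 2k`.
-/

open Finset in
theorem Finset.card_filter_lt_orderEmbOfFin {α : Type*} [LinearOrder α] (s : Finset α) {m : ℕ}
    (h : #s = m) (i : Fin m) : #(s.filter (· < s.orderEmbOfFin h i)) = i := by
  generalize he : s.orderEmbOfFin h = e
  have hs : univ.image e = s := he ▸ s.image_orderEmbOfFin_univ h
  calc #(s.filter (· < e i)) = #((Iio i).image e) := by
        rw [← hs, filter_image]
        congr 1
        ext x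
        simp [e.lt_iff_lt]
    _ = i := by rw [card_image_of_injective _ e.injective, Fin.card_Iio]

section Pivots

variable {R ρ ι : Type*} [Ring R] [Fintype ρ] [DecidableEq ρ]
  {v : ρ → ι → R} {p : ρ → ι}

theorem sum_smul_apply_pivot (hv : ∀ i j, v i (p j) = if j = i then 1 else 0) (g : ρ → R) (j : ρ) :
    (∑ i, g i • v i) (p j) = g j := by
  simp [Finset.sum_apply, hv]

theorem linearIndependent_of_pivot (hv : ∀ i j, v i (p j) = if j = i then 1 else 0) :
    LinearIndependent R v :=
  Fintype.linearIndependent_iff.mpr fun g hg j => by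
    rw [← sum_smul_apply_pivot hv g j, hg, Pi.zero_apply]

theorem disjoint_span_of_pivot (hv : ∀ i j, v i (p j) = if j = i then 1 else 0)
    {σ : Type*} (w : σ → ι → R) (hw : ∀ i j, w i (p j) = 0) :
    Disjoint (Submodule.span R (Set.range v)) (Submodule.span R (Set.range w)) := by
  rw [Submodule.disjoint_def]
  intro x hx hxw
  obtain ⟨g, rfl⟩ := (Submodule.mem_span_range_iff_exists_fun R).mp hx
  have hg : g = 0 := funext fun j => by
    rw [← sum_smul_apply_pivot hv g j]
    exact Submodule.span_induction (p := fun y _ => y (p j) = 0)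
      (by rintro _ ⟨i, rfl⟩; exact hw i j) rfl (fun _ _ _ _ h₁ h₂ => by simp [h₁, h₂])
      (fun _ _ _ h => by simp [h]) hxw
  simp [hg]

end Pivots

section InsertZeroCols

open Finset

variable {F : Type*} [Field F] {k' kb nb : ℕ}

theorem insertZeroCols_apply_pivot (c : Fin kb → Fin nb) (M : Matrix (Fin k') (Fin (nb - kb)) F)
    (i : Fin k') (t : Fin kb) : insertZeroCols c M i (c t) = 0 := by
  simp [insertZeroCols]

theorem insertZeroCols_sub (c : Fin kb → Fin nb) (M M' : Matrix (Fin k') (Fin (nb - kb)) F) :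
    insertZeroCols c (M - M') = insertZeroCols c M - insertZeroCols c M' := by
  ext i j
  simp only [Matrix.sub_apply, insertZeroCols, Matrix.of_apply]
  split_ifs <;> simp

theorem sub_card_pivots_le_eq_card_nonpivots_lt {c : Fin kb → Fin nb} (hc : Function.Injective c)
    {j : Fin nb} (hj : ¬∃ t, c t = j) :
    (j : ℕ) - #{t | (c t : ℕ) ≤ j} = #((univ.image c)ᶜ.filter (· < j)) := by
  classical
  set P := univ.image c
  have hpiv : #{t | (c t : ℕ) ≤ j} = #(P.filter (· < j)) := by
    rw [← card_image_of_injective _ hc]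
    congr 1
    ext m
    simp only [mem_filter, mem_image, mem_univ, true_and, P]
    constructor
    · rintro ⟨t, ht, rfl⟩
      exact ⟨⟨t, rfl⟩, lt_of_le_of_ne (Fin.le_def.mpr ht) fun h => hj ⟨t, h⟩⟩
    · rintro ⟨⟨t, rfl⟩, ht⟩
      exact ⟨t, Fin.le_def.mp ht.le, rfl⟩
  have hsplit : #(P.filter (· < j)) + #(Pᶜ.filter (· < j)) = j := by
    rw [← Fin.card_Iio j, ← card_filter_add_card_filter_not (s := Iio j) (· ∈ P)]
    congr 2 <;> ext m <;> simp [P, and_comm]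
  omega

theorem exists_insertZeroCols_col_eq {c : Fin kb → Fin nb} (hc : Function.Injective c)
    (M : Matrix (Fin k') (Fin (nb - kb)) F) (s : Fin (nb - kb)) :
    ∃ j, (insertZeroCols c M).col j = M.col s := by
  classical
  set N := (univ.image c)ᶜ
  have hN : #N = nb - kb := by
    rw [card_compl, card_image_of_injective _ hc, card_univ, Fintype.card_fin, Fintype.card_fin]
  -- the `s`-th non-pivot column
  set j := N.orderEmbOfFin hN s
  have hj : ¬∃ t, c t = j := fun ⟨t, ht⟩ =>
    mem_compl.mp (N.orderEmbOfFin_mem hN s) (mem_image.mpr ⟨t, mem_univ t, ht⟩)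
  have hidx : (j : ℕ) - #{t | (c t : ℕ) ≤ j} = s := by
    rw [sub_card_pivots_le_eq_card_nonpivots_lt hc hj, card_filter_lt_orderEmbOfFin]
  refine ⟨j, funext fun i => ?_⟩
  simp only [Matrix.col, Matrix.transpose_apply, insertZeroCols, Matrix.of_apply, if_neg hj]
  rw [dif_pos (by convert s.2)]
  exact congrArg (M i) (Fin.ext (by convert hidx))

theorem insertZeroCols_col_eq_zero_or (c : Fin kb → Fin nb)
    (M : Matrix (Fin k') (Fin (nb - kb)) F) (j : Fin nb) :
    (insertZeroCols c M).col j = 0 ∨ ∃ s, (insertZeroCols c M).col j = M.col s := by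
  classical
  by_cases hj : ∃ t, c t = j
  · left
    ext i
    simp [insertZeroCols, hj]
  by_cases hlt : (j : ℕ) - #{t | (c t : ℕ) ≤ j} < nb - kb
  · right
    refine ⟨⟨_, hlt⟩, funext fun i => ?_⟩
    simp only [Matrix.col, Matrix.transpose_apply, insertZeroCols, Matrix.of_apply, if_neg hj]
    rw [dif_pos (by convert hlt)]
  · left
    ext i
    simp only [Matrix.col, Matrix.transpose_apply, insertZeroCols, Matrix.of_apply, if_neg hj]
    rw [dif_neg (by convert hlt)]
    rfl

theorem rank_insertZeroCols {c : Fin kb → Fin nb} (hc : Function.Injective c)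
    (M : Matrix (Fin k') (Fin (nb - kb)) F) : (insertZeroCols c M).rank = M.rank := by
  apply le_antisymm
  · rw [Matrix.rank_eq_finrank_span_cols, Matrix.rank_eq_finrank_span_cols]
    refine Submodule.finrank_mono (Submodule.span_le.mpr ?_)
    rintro _ ⟨j, rfl⟩
    rcases insertZeroCols_col_eq_zero_or c M j with h | ⟨s, h⟩
    · rw [h]
      exact zero_mem _
    · rw [h]
      exact Submodule.subset_span ⟨s, rfl⟩
  · choose σ hσ using exists_insertZeroCols_col_eq hc M
    calc M.rank = ((insertZeroCols c M).submatrix id σ).rank := by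
          congr
          ext i s
          exact (congrFun (hσ s) i).symm
      _ ≤ (insertZeroCols c M).rank := Matrix.rank_submatrix_le _ _ _

end InsertZeroCols

theorem Matrix.fromBlocks_apply_sumMap_eq_ite {α l m n o : Type*} [Zero α] [One α]
    [DecidableEq m] [DecidableEq o] {A : Matrix m l α} {B : Matrix o n α} {ca : m → l} {cb : o → n}
    (hA : ∀ i j, A i (ca j) = if j = i then 1 else 0)
    (hB : ∀ i j, B i (cb j) = if j = i then 1 else 0)
    {N : Matrix m n α} (hN : ∀ i t, N i (cb t) = 0) (i j : m ⊕ o) :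
    Matrix.fromBlocks A N 0 B i (Sum.map ca cb j) = if j = i then 1 else 0 := by
  rcases i with i | i <;> rcases j with j | j <;> simp [hA, hB, hN]

theorem Matrix.rank_fromBlocks_zero₁₁_zero₂₁_zero₂₂ {F l m n o : Type*} [Field F]
    [Fintype l] [Fintype m] [Fintype n] [Fintype o] [DecidableEq m] [DecidableEq n]
    (X : Matrix m n F) : (Matrix.fromBlocks (0 : Matrix m l F) X (0 : Matrix o l F) 0).rank =
      X.rank := by
  apply le_antisymm
  · have : Matrix.fromBlocks (0 : Matrix m l F) X (0 : Matrix o l F) 0 =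
        Matrix.fromRows (1 : Matrix m m F) (0 : Matrix o m F) * X *
          Matrix.fromCols (0 : Matrix n l F) (1 : Matrix n n F) := by
      ext (i | i) (j | j) <;> simp [Matrix.mul_apply, Matrix.one_apply]
    rw [this]
    exact (Matrix.rank_mul_le_left _ _).trans (Matrix.rank_mul_le_right _ _)
  · calc X.rank = ((Matrix.fromBlocks (0 : Matrix m l F) X (0 : Matrix o l F) 0).submatrix
            Sum.inl Sum.inr).rank := rfl
      _ ≤ _ := Matrix.rank_submatrix_le _ _ _

theorem Submodule.span_range_sup_span_range_sub {R V ρ : Type*} [Ring R] [AddCommGroup V]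
    [Module R V] (v w : ρ → V) :
    span R (Set.range v) ⊔ span R (Set.range w) =
      span R (Set.range v) ⊔ span R (Set.range (v - w)) := by
  have hv : ∀ i, v i ∈ span R (Set.range v) := fun i => subset_span ⟨i, rfl⟩
  apply le_antisymm <;> refine sup_le le_sup_left (span_le.mpr ?_) <;> rintro _ ⟨i, rfl⟩
  · rw [show w i = v i - (v - w) i by simp]
    exact sub_mem (mem_sup_left (hv i)) (mem_sup_right (subset_span ⟨i, rfl⟩))
  · exact sub_mem (mem_sup_left (hv i)) (mem_sup_right (subset_span ⟨i, rfl⟩))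

theorem finrank_rowSpace' {F ρ ι : Type*} [Field F] [Fintype ρ] [Fintype ι] (A : Matrix ρ ι F) :
    finrank F (rowSpace' A) = A.rank :=
  A.rank_eq_finrank_span_row.symm

theorem finrank_rowSpace'_of_pivot {F ρ ι : Type*} [Field F] [Fintype ρ] [Fintype ι]
    [DecidableEq ρ] {G : Matrix ρ ι F} {p : ρ → ι}
    (hG : ∀ i j, G i (p j) = if j = i then 1 else 0) :
    finrank F (rowSpace' G) = Fintype.card ρ := by
  rw [finrank_rowSpace', LinearIndependent.rank_matrix (M := G) (linearIndependent_of_pivot hG)]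

theorem subspaceDist_eq {F V : Type*} [Field F] [AddCommGroup V] [Module F V]
    [FiniteDimensional F V] (U W : Submodule F V) :
    subspaceDist U W = 2 * finrank F ↥(U ⊔ W) - finrank F U - finrank F W := by
  have := Submodule.finrank_sup_add_finrank_inf_eq U W
  have := Submodule.finrank_mono (inf_le_left : U ⊓ W ≤ U)
  have := Submodule.finrank_mono (inf_le_right : U ⊓ W ≤ W)
  rw [subspaceDist]
  omega

theorem coset_dist_same_AB_general {F : Type*} [Field F] {n k n' k' : ℕ}
    (A : Matrix (Fin k') (Fin n') F) (ca : Fin k' → Fin n') (hA : IsRRE A ca)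
    (B : Matrix (Fin (k - k')) (Fin (n - n')) F) (cb : Fin (k - k') → Fin (n - n'))
    (hB : IsRRE B cb)
    (M M' : Matrix (Fin k') (Fin ((n - n') - (k - k'))) F) :
    subspaceDist
        (rowSpace' (Matrix.fromBlocks A (insertZeroCols cb M) 0 B))
        (rowSpace' (Matrix.fromBlocks A (insertZeroCols cb M') 0 B)) =
      2 * (M - M').rank := by
  set G := Matrix.fromBlocks A (insertZeroCols cb M) 0 B
  set G' := Matrix.fromBlocks A (insertZeroCols cb M') 0 B
  have hG := Matrix.fromBlocks_apply_sumMap_eq_ite hA.2.1 hB.2.1 (insertZeroCols_apply_pivot cb M)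
  have hG' := Matrix.fromBlocks_apply_sumMap_eq_ite hA.2.1 hB.2.1 (insertZeroCols_apply_pivot cb M')
  have hdiff : G - G' = Matrix.fromBlocks 0 (insertZeroCols cb (M - M')) 0 0 := by
    rw [insertZeroCols_sub]
    ext (i | i) (j | j) <;> simp [G, G']
  have hdisj : Disjoint (rowSpace' G) (rowSpace' (G - G')) := by
    refine disjoint_span_of_pivot hG _ ?_
    rw [hdiff]
    rintro (i | i) (j | j) <;> simp [insertZeroCols_apply_pivot]
  have hsup : rowSpace' G ⊔ rowSpace' G' = rowSpace' G ⊔ rowSpace' (G - G') :=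
    Submodule.span_range_sup_span_range_sub G G'
  have hdimG : finrank F (rowSpace' G) = _ := finrank_rowSpace'_of_pivot hG
  have hdimG' : finrank F (rowSpace' G') = _ := finrank_rowSpace'_of_pivot hG'
  have hdimD : finrank F (rowSpace' (G - G')) = (M - M').rank := by
    rw [finrank_rowSpace', hdiff,
      Matrix.rank_fromBlocks_zero₁₁_zero₂₁_zero₂₂, rank_insertZeroCols hB.1.injective]
  have hdimSup := Submodule.finrank_sup_add_finrank_inf_eq (rowSpace' G) (rowSpace' (G - G'))
  rw [hdisj.eq_bot, finrank_bot, add_zero] at hdimSup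
  rw [subspaceDist_eq, hsup, hdimSup, hdimG, hdimG', hdimD]
  omega

/-- If `A = A'` and `B = B'` in the coset construction, the subspace distance of
the row spaces of `[[A, φ_B(F)],[0, B]]` and `[[A, φ_B(F')],[0, B]]` equals
`2 · d_R(F, F')`. -/
theorem coset_dist_same_AB {F : Type*} [Field F] [Fintype F] {n k n' k' : ℕ}
    (hk : 1 ≤ k) (hkn : 2 * k ≤ n) (hk' : 1 ≤ k') (hk'n' : k' ≤ n')
    (hkk' : 1 ≤ k - k') (hkn' : k - k' ≤ n - n')
    (A : Matrix (Fin k') (Fin n') F) (ca : Fin k' → Fin n') (hA : IsRRE A ca)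
    (B : Matrix (Fin (k - k')) (Fin (n - n')) F) (cb : Fin (k - k') → Fin (n - n'))
    (hB : IsRRE B cb)
    (M M' : Matrix (Fin k') (Fin ((n - n') - (k - k'))) F) :
    subspaceDist
        (rowSpace' (Matrix.fromBlocks A (insertZeroCols cb M) 0 B))
        (rowSpace' (Matrix.fromBlocks A (insertZeroCols cb M') 0 B)) =
      2 * (M - M').rank :=
  coset_dist_same_AB_general A ca hA B cb hB M M'
end

section
/- Let C be a code from the coset construction with subspace distance d, i.e., C consists of row spaces of matrices [[A, φ_B(F)],[0, B]] with τ^{-1}(A) ∈ A_i, τ^{-1}(B) ∈ B_i for 1 ≤ i ≤ l and F ∈ F̄, and assume the minimum subspace distance of C is at least d. Then for every index i, the minimum subspace distance within A_i is at least d, and the minimum subspace distance within B_i is at least d. -/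
open Module

/-!
Choosing `M = 0 ∈ F̄`, the code contains, up to the identification
`F^(n' ⊕ (n - n')) ≃ F^n' × F^(n - n')`, every product `U × V` with `U ∈ 𝒜 i` and `V ∈ ℬ i`:
every subspace is the row space of a matrix in reduced row echelon form (its pivots are the
leading positions of its nonzero vectors). Since `d_S(U × V, U' × V) = d_S(U, U')` and
`d_S(U × V, U × V') = d_S(V, V')`, each distance inside `𝒜 i` or `ℬ i` is a distance between
two distinct codewords.
-/

namespace Submodule

variable {F M N : Type*} [Field F] [AddCommGroup M] [AddCommGroup N] [Module F M] [Module F N]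

theorem finrank_prod [FiniteDimensional F M] [FiniteDimensional F N]
    (p : Submodule F M) (q : Submodule F N) :
    finrank F (p.prod q) = finrank F p + finrank F q := by
  have hinj : Function.Injective (p.subtype.prodMap q.subtype) :=
    Prod.map_injective.mpr ⟨p.injective_subtype, q.injective_subtype⟩
  rw [← Module.finrank_prod, ← LinearMap.finrank_range_of_inj hinj, LinearMap.range_prodMap,
    range_subtype, range_subtype]

theorem prod_left_injective (q : Submodule F N) :
    Function.Injective fun p : Submodule F M => p.prod q := fun p p' h => by
  simpa only [prod_comap_inl] using congr_arg (comap (LinearMap.inl F M N)) h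

theorem prod_right_injective (p : Submodule F M) :
    Function.Injective fun q : Submodule F N => p.prod q := fun q q' h => by
  simpa only [prod_comap_inr] using congr_arg (comap (LinearMap.inr F M N)) h

end Submodule

section SubspaceDist

variable {F M N : Type*} [Field F] [AddCommGroup M] [AddCommGroup N] [Module F M] [Module F N]

theorem subspaceDist_map {P : Type*} [AddCommGroup P] [Module F P] (e : M ≃ₗ[F] P)
    (p q : Submodule F M) :
    subspaceDist (p.map (e : M →ₗ[F] P)) (q.map (e : M →ₗ[F] P)) = subspaceDist p q := by
  rw [subspaceDist, subspaceDist, ← Submodule.map_inf _ e.injective,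
    LinearEquiv.finrank_map_eq, LinearEquiv.finrank_map_eq, LinearEquiv.finrank_map_eq]

variable [FiniteDimensional F M] [FiniteDimensional F N]

theorem subspaceDist_prod_left (p p' : Submodule F M) (q : Submodule F N) :
    subspaceDist (p.prod q) (p'.prod q) = subspaceDist p p' := by
  unfold subspaceDist
  rw [Submodule.prod_inf_prod, inf_idem, Submodule.finrank_prod, Submodule.finrank_prod,
    Submodule.finrank_prod]
  omega

theorem subspaceDist_prod_right (p : Submodule F M) (q q' : Submodule F N) :
    subspaceDist (p.prod q) (p.prod q') = subspaceDist q q' := by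
  unfold subspaceDist
  rw [Submodule.prod_inf_prod, inf_idem, Submodule.finrank_prod, Submodule.finrank_prod,
    Submodule.finrank_prod]
  omega

end SubspaceDist

theorem insertZeroCols_zero {F : Type*} [Field F] {k' kb nb : ℕ} (c : Fin kb → Fin nb) :
    insertZeroCols c (0 : Matrix (Fin k') (Fin (nb - kb)) F) = 0 := by
  ext i j
  simp only [insertZeroCols, Matrix.of_apply, Matrix.zero_apply]
  split_ifs <;> rfl

theorem map_rowSpace'_fromBlocks_zero {F : Type*} [Field F] {k₁ k₂ n₁ n₂ : ℕ}
    (A : Matrix (Fin k₁) (Fin n₁) F) (B : Matrix (Fin k₂) (Fin n₂) F) :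
    (rowSpace' (Matrix.fromBlocks A 0 0 B)).map
        (LinearEquiv.sumArrowLequivProdArrow (Fin n₁) (Fin n₂) F F : _ →ₗ[F] _) =
      (rowSpace A).prod (rowSpace B) := by
  have rows : (LinearEquiv.sumArrowLequivProdArrow (Fin n₁) (Fin n₂) F F) ∘
      (fun i => Matrix.fromBlocks A 0 0 B i) =
        Sum.elim (LinearMap.inl F _ _ ∘ fun i => A i) (LinearMap.inr F _ _ ∘ fun i => B i) := by
    funext i
    cases i <;> ext j <;> simp
  rw [rowSpace', Submodule.map_span, ← Set.range_comp, LinearEquiv.coe_coe, rows,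
    Set.Sum.elim_range, Set.range_comp, Set.range_comp, LinearMap.span_inl_union_inr]
  rfl

section Pivots

variable {F : Type*} [Field F] {n : ℕ}

def IsLeadingPos (v : Fin n → F) (j : Fin n) : Prop :=
  (∀ j' < j, v j' = 0) ∧ v j ≠ 0

theorem exists_isLeadingPos {v : Fin n → F} (hv : v ≠ 0) : ∃ j, IsLeadingPos v j := by
  obtain ⟨j, hj, hmin⟩ := wellFounded_lt.has_min {j | v j ≠ 0} (Function.ne_iff.mp hv)
  exact ⟨j, fun j' hj' => by_contra fun h => hmin j' h hj', hj⟩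

open Classical in
noncomputable def pivots (U : Submodule F (Fin n → F)) : Finset (Fin n) :=
  {j | ∃ v ∈ U, IsLeadingPos v j}

theorem mem_pivots {U : Submodule F (Fin n → F)} {v : Fin n → F} {j : Fin n} (hv : v ∈ U)
    (hj : IsLeadingPos v j) : j ∈ pivots U := by
  classical
  simpa [pivots] using ⟨v, hv, hj⟩

def restrictPivots (U : Submodule F (Fin n → F)) : U →ₗ[F] (pivots U → F) :=
  LinearMap.funLeft F F Subtype.val ∘ₗ U.subtype

theorem restrictPivots_injective (U : Submodule F (Fin n → F)) :
    Function.Injective (restrictPivots U) := by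
  refine (injective_iff_map_eq_zero _).mpr fun v hv => by_contra fun hv0 => ?_
  obtain ⟨j, hj⟩ := exists_isLeadingPos (v := (v : Fin n → F)) (by simpa using hv0)
  exact hj.2 (congr_fun hv ⟨j, mem_pivots v.2 hj⟩)

theorem restrictPivots_surjective (U : Submodule F (Fin n → F)) :
    Function.Surjective (restrictPivots U) := by
  classical
  have : ∀ s : pivots U, ∃ v : U, IsLeadingPos (v : Fin n → F) s := fun s => by
    obtain ⟨v, hv, hs⟩ := by simpa [pivots] using s.2
    exact ⟨⟨v, hv⟩, hs⟩
  choose w hw using this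
  let T : Matrix (pivots U) (pivots U) F := fun s => restrictPivots U (w s)
  have hT : T.IsUpperTriangular := fun s t hts => (hw s).1 t hts
  have hdet : T.det ≠ 0 := by
    rw [Matrix.det_of_isUpperTriangular hT]
    exact Finset.prod_ne_zero_iff.mpr fun s _ => (hw s).2
  have hspan := (Matrix.linearIndependent_rows_of_det_ne_zero hdet).span_eq_top_of_card_eq_finrank'
    (Module.finrank_fintype_fun_eq_card F).symm
  rw [← LinearMap.range_eq_top, eq_top_iff, ← hspan, Submodule.span_le]
  rintro _ ⟨s, rfl⟩
  exact ⟨w s, rfl⟩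

end Pivots

theorem exists_isRRE {F : Type*} [Field F] {k n : ℕ} (U : Submodule F (Fin n → F))
    (hU : finrank F U = k) :
    ∃ (A : Matrix (Fin k) (Fin n) F) (c : Fin k → Fin n), IsRRE A c ∧ rowSpace A = U := by
  let e := LinearEquiv.ofBijective (restrictPivots U)
    ⟨restrictPivots_injective U, restrictPivots_surjective U⟩
  have hcard : (pivots U).card = k := by
    rw [← hU, e.finrank_eq, Module.finrank_fintype_fun_eq_card, Fintype.card_coe]
  let σ := (pivots U).orderIsoOfFin hcard
  let b : Basis (Fin k) F U := ((Pi.basisFun F (pivots U)).reindex σ.symm.toEquiv).map e.symm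
  have hb : ∀ i (s : pivots U), (b i : Fin n → F) s = if s = σ i then 1 else 0 := by
    intro i s
    change e (b i) s = _
    simp [b, Pi.single_apply]
  refine ⟨Matrix.of fun i => (b i : Fin n → F), fun i => σ i, ⟨?_, ?_, ?_⟩, ?_⟩
  · exact fun i j hij => σ.strictMono hij
  · intro i j
    simp [hb, σ.injective.eq_iff]
  · intro i j hj
    by_contra hij
    obtain ⟨p, hp⟩ := exists_isLeadingPos (v := (b i : Fin n → F)) (Function.ne_iff.mpr ⟨j, hij⟩)
    have hpj : p ≤ j := not_lt.mp fun hjp => hij (hp.1 j hjp)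
    have hpσ : (⟨p, mem_pivots (b i).2 hp⟩ : pivots U) = σ i := by
      by_contra h
      exact hp.2 (by simpa [h] using hb i ⟨p, mem_pivots (b i).2 hp⟩)
    exact absurd (hpσ ▸ hpj : ((σ i : pivots U) : Fin n) ≤ j) (not_le.mpr hj)
  · rw [rowSpace, show Set.range (fun i => Matrix.of (fun i => (b i : Fin n → F)) i) =
      U.subtype '' Set.range b from Set.range_comp U.subtype b, Submodule.span_image, b.span_eq,
      Submodule.map_subtype_top]

theorem coset_parts_minDist_general {F : Type*} [Field F] {n k n' k' l d : ℕ}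
    (𝒜 : Fin l → Set (Submodule F (Fin n' → F)))
    (ℬ : Fin l → Set (Submodule F (Fin (n - n') → F)))
    (Fbar : Set (Matrix (Fin k') (Fin ((n - n') - (k - k'))) F))
    (h𝒜ne : ∀ i, (𝒜 i).Nonempty) (hℬne : ∀ i, (ℬ i).Nonempty)
    (h𝒜dim : ∀ i, ∀ U ∈ 𝒜 i, finrank F U = k')
    (hℬdim : ∀ i, ∀ V ∈ ℬ i, finrank F V = k - k')
    (hF0 : (0 : Matrix (Fin k') (Fin ((n - n') - (k - k'))) F) ∈ Fbar)
    (C : Set (Submodule F ((Fin n' ⊕ Fin (n - n')) → F)))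
    (hC : C = {W | ∃ (i : Fin l) (A : Matrix (Fin k') (Fin n') F)
        (ca : Fin k' → Fin n') (B : Matrix (Fin (k - k')) (Fin (n - n')) F)
        (cb : Fin (k - k') → Fin (n - n'))
        (M : Matrix (Fin k') (Fin ((n - n') - (k - k'))) F),
        IsRRE A ca ∧ IsRRE B cb ∧ rowSpace A ∈ 𝒜 i ∧ rowSpace B ∈ ℬ i ∧ M ∈ Fbar ∧
          W = rowSpace' (Matrix.fromBlocks A (insertZeroCols cb M) 0 B)})
    (hdist : ∀ U ∈ C, ∀ W ∈ C, U ≠ W → d ≤ subspaceDist U W) :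
    ∀ i : Fin l,
      (∀ U ∈ 𝒜 i, ∀ U' ∈ 𝒜 i, U ≠ U' → d ≤ subspaceDist U U') ∧
      (∀ V ∈ ℬ i, ∀ V' ∈ ℬ i, V ≠ V' → d ≤ subspaceDist V V') := by
  intro i
  let ε := LinearEquiv.sumArrowLequivProdArrow (Fin n') (Fin (n - n')) F F
  have prod_mem : ∀ U ∈ 𝒜 i, ∀ V ∈ ℬ i, ∃ W ∈ C, W.map (ε : _ →ₗ[F] _) = U.prod V := by
    intro U hU V hV
    obtain ⟨A, ca, hA, rfl⟩ := exists_isRRE U (h𝒜dim i U hU)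
    obtain ⟨B, cb, hB, rfl⟩ := exists_isRRE V (hℬdim i V hV)
    refine ⟨rowSpace' (Matrix.fromBlocks A (insertZeroCols cb 0) 0 B),
      hC ▸ ⟨i, A, ca, B, cb, 0, hA, hB, hU, hV, hF0, rfl⟩, ?_⟩
    rw [insertZeroCols_zero, map_rowSpace'_fromBlocks_zero]
  have prod_dist : ∀ U ∈ 𝒜 i, ∀ V ∈ ℬ i, ∀ U' ∈ 𝒜 i, ∀ V' ∈ ℬ i,
      U.prod V ≠ U'.prod V' → d ≤ subspaceDist (U.prod V) (U'.prod V') := by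
    intro U hU V hV U' hU' V' hV' hne
    obtain ⟨W, hW, hWUV⟩ := prod_mem U hU V hV
    obtain ⟨W', hW', hWUV'⟩ := prod_mem U' hU' V' hV'
    rw [← hWUV, ← hWUV', subspaceDist_map]
    exact hdist W hW W' hW' fun h => hne (hWUV.symm.trans (h ▸ hWUV'))
  refine ⟨fun U hU U' hU' hne => ?_, fun V hV V' hV' hne => ?_⟩
  · obtain ⟨V, hV⟩ := hℬne i
    rw [← subspaceDist_prod_left U U' V]
    exact prod_dist U hU V hV U' hU' V hV ((Submodule.prod_left_injective V).ne hne)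
  · obtain ⟨U, hU⟩ := h𝒜ne i
    rw [← subspaceDist_prod_right U V V']
    exact prod_dist U hU V hV U hU V' hV' ((Submodule.prod_right_injective U).ne hne)

/-- If the code obtained from the coset construction has minimum subspace distance
at least `d`, then every part `𝒜 i` and every part `ℬ i` has minimum subspace
distance at least `d`. -/
theorem coset_parts_minDist {F : Type*} [Field F] [Fintype F] {n k n' k' l d : ℕ}
    (hk : 1 ≤ k) (hkn : 2 * k ≤ n) (hk' : 1 ≤ k') (hk'n' : k' ≤ n')
    (hkk' : 1 ≤ k - k') (hkn' : k - k' ≤ n - n')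
    (𝒜 : Fin l → Set (Submodule F (Fin n' → F)))
    (ℬ : Fin l → Set (Submodule F (Fin (n - n') → F)))
    (Fbar : Set (Matrix (Fin k') (Fin ((n - n') - (k - k'))) F))
    (h𝒜ne : ∀ i, (𝒜 i).Nonempty) (hℬne : ∀ i, (ℬ i).Nonempty)
    (h𝒜dim : ∀ i, ∀ U ∈ 𝒜 i, finrank F U = k')
    (hℬdim : ∀ i, ∀ V ∈ ℬ i, finrank F V = k - k')
    (hF0 : (0 : Matrix (Fin k') (Fin ((n - n') - (k - k'))) F) ∈ Fbar)
    (C : Set (Submodule F ((Fin n' ⊕ Fin (n - n')) → F)))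
    (hC : C = {W | ∃ (i : Fin l) (A : Matrix (Fin k') (Fin n') F)
        (ca : Fin k' → Fin n') (B : Matrix (Fin (k - k')) (Fin (n - n')) F)
        (cb : Fin (k - k') → Fin (n - n'))
        (M : Matrix (Fin k') (Fin ((n - n') - (k - k'))) F),
        IsRRE A ca ∧ IsRRE B cb ∧ rowSpace A ∈ 𝒜 i ∧ rowSpace B ∈ ℬ i ∧ M ∈ Fbar ∧
          W = rowSpace' (Matrix.fromBlocks A (insertZeroCols cb M) 0 B)})
    (hdist : ∀ U ∈ C, ∀ W ∈ C, U ≠ W → d ≤ subspaceDist U W) :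
    ∀ i : Fin l,
      (∀ U ∈ 𝒜 i, ∀ U' ∈ 𝒜 i, U ≠ U' → d ≤ subspaceDist U U') ∧
      (∀ V ∈ ℬ i, ∀ V' ∈ ℬ i, V ≠ V' → d ≤ subspaceDist V V') :=
  coset_parts_minDist_general 𝒜 ℬ Fbar h𝒜ne hℬne h𝒜dim hℬdim hF0 C hC hdist
end
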